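/- arXiv:quant-ph/0608197 — 5 statements merged into one kernel-verified Lean document; each statement's English description precedes it below -/
import Mathlib

section
/- Let ψ ∈ (ℂ^d)^{⊗N} have a TI MPS representation by D×D matrices A_i satisfying ∑_i A_i A_i† = 1 and condition C1 with parameter L_0 < N. Then for every cut of the ring into two blocks of consecutive sites [1…R] and [R+1…N] with R ≥ L_0 and N−R ≥ L_0, the d^R × d^{N−R} matrix M with entries M[(i_1,…,i_R),(i_{R+1},…,i_N)] = c(i_1,…,i_N) has rank exactly D²; equivalently, the reduced density operator of ψ on sites 1,…,R has rank exactly D². -/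
/-!
Write `P w` for the product of the matrices along a word `w`. Since `∑ᵢ Aᵢ Aᵢᴴ = 1`, every
matrix `B` equals `∑ᵢ Aᵢ (Aᵢᴴ B)`, so once the words of length `L₀` span all `D × D` matrices,
so do the words of every length `L ≥ L₀`. Cutting the ring after site `R`, the coefficient
`tr (P a * P b)` is the dot product of `vec (P a)ᵀ` and `vec (P b)`, so the coefficient matrix
factors through `ℂ^(D × D)`, and both factors are onto because both blocks have length at
least `L₀`. Hence its rank is `D²`.
-/

open scoped Matrix

/-- Coefficient of a translationally invariant MPS with site-independent matrices. -/
noncomputable def tiCoeff {d D N : ℕ} (A : Fin d → Matrix (Fin D) (Fin D) ℂ)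
    (i : Fin N → Fin d) : ℂ :=
  Matrix.trace (List.ofFn fun k => A (i k)).prod

open Matrix Submodule

section Words

variable {ι 𝒜 : Type*}

def wordProd [Monoid 𝒜] (a : ι → 𝒜) {L : ℕ} (w : Fin L → ι) : 𝒜 :=
  (List.ofFn fun k => a (w k)).prod

lemma wordProd_cons [Monoid 𝒜] (a : ι → 𝒜) {L : ℕ} (i : ι) (w : Fin L → ι) :
    wordProd a (Fin.cons i w) = a i * wordProd a w := by
  simp [wordProd, List.ofFn_succ]

lemma wordProd_append [Monoid 𝒜] (a : ι → 𝒜) {L M : ℕ} (u : Fin L → ι) (v : Fin M → ι) :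
    wordProd a (Fin.append u v) = wordProd a u * wordProd a v := by
  simp [wordProd, List.ofFn_add, Fin.append_right]

lemma wordProd_comp_cast [Monoid 𝒜] (a : ι → 𝒜) {L M : ℕ} (h : L = M) (w : Fin M → ι) :
    wordProd a (fun k => w (Fin.cast h k)) = wordProd a w := by
  subst h
  rfl

variable (R : Type*) [CommSemiring R] [Semiring 𝒜] [Algebra R 𝒜]

def wordSpan (a : ι → 𝒜) (L : ℕ) : Submodule R 𝒜 :=
  span R (Set.range (wordProd a (L := L)))

variable {R}

lemma mul_mem_wordSpan_succ {a : ι → 𝒜} {L : ℕ} (i : ι) {x : 𝒜} (hx : x ∈ wordSpan R a L) :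
    a i * x ∈ wordSpan R a (L + 1) := by
  have hmap : (wordSpan R a L).map (LinearMap.mulLeft R (a i)) ≤ wordSpan R a (L + 1) := by
    rw [wordSpan, map_span, span_le]
    rintro _ ⟨_, ⟨w, rfl⟩, rfl⟩
    exact subset_span ⟨Fin.cons i w, wordProd_cons a i w⟩
  exact hmap (mem_map_of_mem hx)

lemma wordSpan_succ_eq_top [Fintype ι] {a b : ι → 𝒜} (hab : ∑ i, a i * b i = 1) {L : ℕ}
    (hL : wordSpan R a L = ⊤) : wordSpan R a (L + 1) = ⊤ := by
  refine eq_top_iff'.2 fun x => ?_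
  have hx : x = ∑ i, a i * (b i * x) := by
    simp only [← mul_assoc, ← Finset.sum_mul, hab, one_mul]
  rw [hx]
  exact sum_mem fun i _ => mul_mem_wordSpan_succ i (hL ▸ mem_top)

lemma wordSpan_eq_top_of_le [Fintype ι] {a b : ι → 𝒜} (hab : ∑ i, a i * b i = 1) {L₀ L : ℕ}
    (hL₀ : wordSpan R a L₀ = ⊤) (hL : L₀ ≤ L) : wordSpan R a L = ⊤ := by
  induction L, hL using Nat.le_induction with
  | base => exact hL₀
  | succ L _ ih => exact wordSpan_succ_eq_top hab ih

end Words

section SpanningMatrices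

variable {ι l m n k R K : Type*} [Semiring R] [Field K] [Fintype ι]

lemma span_range_transpose_eq_top {P : ι → Matrix m n R} (hP : span R (Set.range P) = ⊤) :
    span R (Set.range fun i => (P i)ᵀ) = ⊤ := by
  refine eq_top_iff'.2 fun Y => ?_
  obtain ⟨c, hc⟩ := (mem_span_range_iff_exists_fun R).1 (hP ▸ mem_top : Yᵀ ∈ span R _)
  refine (mem_span_range_iff_exists_fun R).2 ⟨c, ?_⟩
  rw [← transpose_transpose Y, ← hc, transpose_sum]
  simp only [transpose_smul]

lemma span_range_vec_eq_top {P : ι → Matrix m n R} (hP : span R (Set.range P) = ⊤) :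
    span R (Set.range fun i => (P i).vec) = ⊤ := by
  refine eq_top_iff'.2 fun y => ?_
  obtain ⟨Y, rfl⟩ := vec_bijective.2 y
  obtain ⟨c, hc⟩ := (mem_span_range_iff_exists_fun R).1 (hP ▸ mem_top : Y ∈ span R _)
  refine (mem_span_range_iff_exists_fun R).2 ⟨c, ?_⟩
  rw [← hc, vec_sum]
  simp only [vec_smul]

lemma rank_mul_transpose_of_span_rows_eq_top [Fintype k] [Fintype l] [Fintype n]
    (X : Matrix l k K) (Y : Matrix n k K) (hX : span K (Set.range X.row) = ⊤) (hY : span K (Set.range Y.row) = ⊤) :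
    (X * Yᵀ).rank = Fintype.card k := by
  have hYt : LinearMap.range Yᵀ.mulVecLin = ⊤ := by
    rw [range_mulVecLin]
    exact hY
  rw [rank, mulVecLin_mul, LinearMap.range_comp, hYt, Submodule.map_top, ← rank,
    rank_eq_finrank_span_row, hX, finrank_top, Module.finrank_fintype_fun_eq_card]

end SpanningMatrices

/-- Rank of reduced density operators under condition C1.
If a TI MPS with `∑ᵢ AᵢAᵢᴴ = 1` satisfies condition C1 with parameter `L0 < N`,
then for every cut of the ring into two blocks `[1…R]`, `[R+1…N]` of at least
`L0` consecutive spins each, the matrix of coefficients (hence the reduced density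
operator on the first block) has rank exactly `D²`. -/
theorem stmt_5 (N d D L0 : ℕ)
    (c : (Fin N → Fin d) → ℂ)
    (A : Fin d → Matrix (Fin D) (Fin D) ℂ)
    (hrep : ∀ i : Fin N → Fin d, c i = tiCoeff A i)
    (hiso : (∑ i, A i * (A i)ᴴ) = 1)
    (hC1 : Submodule.span ℂ
      {M : Matrix (Fin D) (Fin D) ℂ |
        ∃ i : Fin L0 → Fin d, M = (List.ofFn fun k => A (i k)).prod} = ⊤)
    (R : ℕ) (hR1 : L0 ≤ R) (hR2 : L0 ≤ N - R) (hRN : R ≤ N) :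
    (Matrix.of fun (a : Fin R → Fin d) (b : Fin (N - R) → Fin d) =>
      c (fun k => Fin.append a b (Fin.cast (by omega) k))).rank = D ^ 2 := by
  have hL0 : wordSpan ℂ A L0 = ⊤ := by
    rw [← hC1, wordSpan]
    congr 1
    ext M
    exact exists_congr fun _ => eq_comm
  have hspan {L : ℕ} (hL : L0 ≤ L) : wordSpan ℂ A L = ⊤ := wordSpan_eq_top_of_le hiso hL0 hL
  have hfactor : (Matrix.of fun (a : Fin R → Fin d) (b : Fin (N - R) → Fin d) =>
      c (fun k => Fin.append a b (Fin.cast (by omega) k))) =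
      (Matrix.of fun a : Fin R → Fin d => (wordProd A a)ᵀ.vec) *
        (Matrix.of fun b : Fin (N - R) → Fin d => (wordProd A b).vec)ᵀ := by
    ext a b
    rw [of_apply, hrep, tiCoeff, mul_apply']
    change _ = (wordProd A a)ᵀ.vec ⬝ᵥ (wordProd A b).vec
    rw [vec_dotProduct_vec, transpose_transpose, ← wordProd_append]
    exact congrArg trace (wordProd_comp_cast A _ _)
  rw [hfactor, rank_mul_transpose_of_span_rows_eq_top, Fintype.card_prod, Fintype.card_fin, sq]
  · rw [of_row]
    exact span_range_vec_eq_top (span_range_transpose_eq_top (P := wordProd A) (hspan hR1))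
  · rw [of_row]
    exact span_range_vec_eq_top (P := wordProd A) (hspan hR2)
end

section
/- Let T, S : V → W be linear maps between complex vector spaces and Y_1,…,Y_n ∈ V vectors such that T(Y_k) = S(Y_{k+1}) for every 1 ≤ k ≤ n−1, the vectors Y_1,…,Y_{n−1} are linearly independent, and Y_n = ∑_{k=1}^{n−1} λ_k Y_k for scalars λ_k. Let x ≠ 0 be any solution of λ_1 x^{n−1} + λ_2 x^{n−2} + ⋯ + λ_{n−1} x = 1 and define μ_k = λ_1 x^k + λ_2 x^{k−1} + ⋯ + λ_k x for 1 ≤ k ≤ n−1. Then the vector Y = ∑_{k=1}^{n−1} μ_k Y_k is nonzero and satisfies T(Y) = (1/x) S(Y). -/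
private lemma icc_sum_eq {M : Type*} [AddCommMonoid M] (m : ℕ) (f : ℕ → M) :
    ∑ k ∈ Finset.Icc 1 m, f k = ∑ i ∈ Finset.range m, f (i + 1) := by
  induction m with
  | zero => simp
  | succ l ih => rw [Finset.sum_Icc_succ_top (by omega), ih, Finset.sum_range_succ]

/-- Key lemma for uniqueness.  Let `T, S : V → W` be linear maps,
`Y 1, …, Y n` vectors with `T (Y k) = S (Y (k+1))` for `1 ≤ k ≤ n-1`,
`Y 1, …, Y (n-1)` linearly independent and `Y n = ∑_{k=1}^{n-1} λ_k Y_k`.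
For any `x ≠ 0` with `∑_{k=1}^{n-1} λ_k x^{n-k} = 1` and
`μ_k = ∑_{j=1}^{k} λ_j x^{k-j+1}`, the vector `Y = ∑_{k=1}^{n-1} μ_k Y_k`
is nonzero and satisfies `T Y = (1/x) • S Y`. -/
theorem stmt_7 {V W : Type*} [AddCommGroup V] [Module ℂ V]
    [AddCommGroup W] [Module ℂ W]
    (T S : V →ₗ[ℂ] W) (n : ℕ) (Y : ℕ → V) (lam : ℕ → ℂ)
    (hTS : ∀ k, 1 ≤ k → k ≤ n - 1 → T (Y k) = S (Y (k + 1)))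
    (hind : LinearIndependent ℂ (fun k : Fin (n - 1) => Y (k.val + 1)))
    (hYn : Y n = ∑ k ∈ Finset.Icc 1 (n - 1), lam k • Y k)
    (x : ℂ) (hx : x ≠ 0)
    (hxeq : ∑ k ∈ Finset.Icc 1 (n - 1), lam k * x ^ (n - k) = 1)
    (μ : ℕ → ℂ)
    (hμ : ∀ k, μ k = ∑ j ∈ Finset.Icc 1 k, lam j * x ^ (k - j + 1)) :
    (∑ k ∈ Finset.Icc 1 (n - 1), μ k • Y k) ≠ 0 ∧
    T (∑ k ∈ Finset.Icc 1 (n - 1), μ k • Y k) =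
      x⁻¹ • S (∑ k ∈ Finset.Icc 1 (n - 1), μ k • Y k) := by
  set m := n - 1 with hm
  -- If m = 0, hxeq is `0 = 1`, contradiction.
  rcases Nat.eq_zero_or_pos m with hm0 | hm1
  · rw [hm0] at hxeq; simp at hxeq
  have hn : n = m + 1 := by omega
  -- μ 0 = 0
  have hμ0 : μ 0 = 0 := by simp [hμ]
  -- μ m = 1
  have hμm : μ m = 1 := by
    rw [hμ, ← hxeq]
    exact Finset.sum_congr rfl fun j hj => by
      have h2 := (Finset.mem_Icc.mp hj).2
      have h3 : m - j + 1 = n - j := by omega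
      rw [h3]
  -- recurrence: μ (k+1) = x * (μ k + lam (k+1))
  have hrec : ∀ k : ℕ, μ (k + 1) = x * (μ k + lam (k + 1)) := by
    intro k
    rw [hμ, hμ, Finset.sum_Icc_succ_top (by omega), mul_add, Finset.mul_sum]
    congr 1
    · exact Finset.sum_congr rfl fun j hj => by
        have := (Finset.mem_Icc.mp hj).2
        have hpow : k + 1 - j + 1 = (k - j + 1) + 1 := by omega
        rw [hpow, pow_succ]
        ring
    · simp [pow_succ]
      ring
  constructor
  · -- nonzero
    intro hzero
    have hsum : ∑ i : Fin m, μ (i.val + 1) • Y (i.val + 1) = 0 := by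
      rw [Fin.sum_univ_eq_sum_range (fun i => μ (i + 1) • Y (i + 1)) m,
        ← icc_sum_eq m (fun k => μ k • Y k)]
      exact hzero
    have := Fintype.linearIndependent_iff.mp hind (fun i => μ (i.val + 1)) hsum
      ⟨m - 1, by omega⟩
    simp only at this
    rw [show m - 1 + 1 = m by omega, hμm] at this
    exact one_ne_zero this
  · -- the identity
    have hTsum : T (∑ k ∈ Finset.Icc 1 m, μ k • Y k)
        = ∑ i ∈ Finset.range m, μ (i + 1) • S (Y (i + 2)) := by
      rw [map_sum, icc_sum_eq m (fun k => T (μ k • Y k))]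
      exact Finset.sum_congr rfl fun i hi => by
        rw [map_smul, hTS (i + 1) (by omega) (by
          have := Finset.mem_range.mp hi; omega)]
    have hSsum : x⁻¹ • S (∑ k ∈ Finset.Icc 1 m, μ k • Y k)
        = (∑ i ∈ Finset.range m, μ i • S (Y (i + 1)))
          + ∑ k ∈ Finset.Icc 1 m, lam k • S (Y k) := by
      rw [map_sum, Finset.smul_sum, icc_sum_eq m (fun k => x⁻¹ • S (μ k • Y k)),
        icc_sum_eq m (fun k => lam k • S (Y k)), ← Finset.sum_add_distrib]
      exact Finset.sum_congr rfl fun i _ => by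
        rw [map_smul, smul_smul, hrec i]
        rw [show x⁻¹ * (x * (μ i + lam (i + 1))) = μ i + lam (i + 1) by
          field_simp]
        rw [add_smul]
    rw [hTsum, hSsum]
    have hlast : ∑ k ∈ Finset.Icc 1 m, lam k • S (Y k) = S (Y (m + 1)) := by
      rw [show (m + 1) = n from hn.symm, hYn, map_sum]
      exact Finset.sum_congr rfl fun k _ => (map_smul S _ _).symm
    rw [hlast]
    have h1 : ∑ i ∈ Finset.range m, μ (i + 1) • S (Y (i + 2))
        = ∑ i ∈ Finset.range m, (fun j => μ j • S (Y (j + 1))) (i + 1) := by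
      exact Finset.sum_congr rfl fun i _ => rfl
    rw [h1, ← add_zero (∑ i ∈ Finset.range m, (fun j => μ j • S (Y (j+1))) (i+1)),
      show (0 : W) = μ 0 • S (Y 1) by rw [hμ0]; simp,
      ← Finset.sum_range_succ' (fun j => μ j • S (Y (j + 1))) m,
      Finset.sum_range_succ, hμm, one_smul]
end

section
/- Let B and C be n×n complex matrices and let S = {X ∈ M_n(ℂ) : XC = BX}. Then the space of solutions W ∈ M_{n²}(ℂ) of the matrix equation W(C ⊗ 1_n) = (B ⊗ 1_n)W, where ⊗ denotes the Kronecker product, is exactly S ⊗ M_n(ℂ), i.e. the linear span of all Kronecker products X ⊗ M with X ∈ S and M ∈ M_n(ℂ). -/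
/-!
Cut `W` into the blocks `W_{jl} = W((·, j), (·, l))`. Multiplying by `C ⊗ 1` or `B ⊗ 1` acts on
each block separately, so `W (C ⊗ 1) = (B ⊗ 1) W` says exactly that every block satisfies
`W_{jl} C = B W_{jl}`; and `W = ∑ W_{jl} ⊗ E_{jl}`. Conversely `X C = B X` gives
`(X ⊗ M)(C ⊗ 1) = XC ⊗ M = BX ⊗ M = (B ⊗ 1)(X ⊗ M)`.
-/

open Kronecker

namespace Matrix

variable {α m n p q : Type*}

def intertwiners [Fintype m] [Fintype n] [CommSemiring α] (B : Matrix m m α)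
    (C : Matrix n n α) :
    Submodule α (Matrix m n α) where
  carrier := {X | X * C = B * X}
  add_mem' {X Y} (hX : X * C = B * X) (hY : Y * C = B * Y) :=
    show (X + Y) * C = B * (X + Y) by rw [Matrix.add_mul, Matrix.mul_add, hX, hY]
  zero_mem' := show 0 * C = B * 0 by rw [Matrix.zero_mul, Matrix.mul_zero]
  smul_mem' c X (hX : X * C = B * X) :=
    show (c • X) * C = B * (c • X) by rw [Matrix.smul_mul, Matrix.mul_smul, hX]

theorem submatrix_mul_kronecker_one [Fintype n] [Fintype q] [DecidableEq q] [Semiring α]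
    (W : Matrix (m × p) (n × q) α) (C : Matrix n n α) (j : p) (l : q) :
    (W * (C ⊗ₖ (1 : Matrix q q α))).submatrix (·, j) (·, l) =
      W.submatrix (·, j) (·, l) * C := by
  ext i k
  simp [mul_apply, Fintype.sum_prod_type, one_apply]

theorem kronecker_one_mul_submatrix [Fintype m] [Fintype p] [DecidableEq p] [Semiring α]
    (W : Matrix (m × p) (n × q) α) (B : Matrix m m α) (j : p) (l : q) :
    ((B ⊗ₖ (1 : Matrix p p α)) * W).submatrix (·, j) (·, l) =
      B * W.submatrix (·, j) (·, l) := by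
  ext i k
  simp [mul_apply, Fintype.sum_prod_type, one_apply]

theorem eq_sum_submatrix_kronecker_single [Fintype p] [Fintype q] [DecidableEq p]
    [DecidableEq q] [Semiring α] (W : Matrix (m × p) (n × q) α) :
    W = ∑ j : p, ∑ l : q, W.submatrix (·, j) (·, l) ⊗ₖ single j l (1 : α) := by
  ext ⟨i, j⟩ ⟨k, l⟩
  simp [sum_apply, single_apply, ite_and]

variable [Fintype m] [Fintype n] [Fintype p] [Fintype q] [DecidableEq p] [DecidableEq q]

theorem mem_intertwiners_kronecker_one_iff [CommSemiring α] (B : Matrix m m α)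
    (C : Matrix n n α) (W : Matrix (m × p) (n × q) α) :
    W ∈ intertwiners (B ⊗ₖ (1 : Matrix p p α)) (C ⊗ₖ (1 : Matrix q q α)) ↔
      ∀ j l, W.submatrix (·, j) (·, l) ∈ intertwiners B C := by
  refine ⟨fun h j l => ?_, fun h => ?_⟩
  · change _ * C = B * _
    rw [← submatrix_mul_kronecker_one, ← kronecker_one_mul_submatrix]
    exact congrArg (submatrix · _ _) h
  · ext ⟨i, j⟩ ⟨k, l⟩
    have hjl := congrFun (congrFun (h j l) i) k
    rwa [← submatrix_mul_kronecker_one, ← kronecker_one_mul_submatrix] at hjl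

theorem kronecker_mem_intertwiners_kronecker_one [CommSemiring α] {B : Matrix m m α}
    {C : Matrix n n α} {X : Matrix m n α} (hX : X ∈ intertwiners B C) (M : Matrix p q α) :
    X ⊗ₖ M ∈ intertwiners (B ⊗ₖ (1 : Matrix p p α)) (C ⊗ₖ (1 : Matrix q q α)) := by
  change _ = _
  rw [← mul_kronecker_mul, ← mul_kronecker_mul, Matrix.mul_one, Matrix.one_mul, hX]

theorem intertwiners_kronecker_one [CommSemiring α] (B : Matrix m m α) (C : Matrix n n α) :
    intertwiners (B ⊗ₖ (1 : Matrix p p α)) (C ⊗ₖ (1 : Matrix q q α)) =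
      Submodule.span α {W | ∃ X M, X ∈ intertwiners B C ∧ W = X ⊗ₖ M} := by
  refine le_antisymm (fun W hW => ?_) (Submodule.span_le.mpr ?_)
  · rw [eq_sum_submatrix_kronecker_single W]
    exact Submodule.sum_mem _ fun j _ => Submodule.sum_mem _ fun l _ =>
      Submodule.subset_span ⟨_, _, (mem_intertwiners_kronecker_one_iff B C W).mp hW j l, rfl⟩
  · rintro _ ⟨X, M, hX, rfl⟩
    exact kronecker_mem_intertwiners_kronecker_one hX M

end Matrix

/-- Solutions of `W (C ⊗ 1) = (B ⊗ 1) W`.  For `n × n` complex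
matrices `B, C`, a matrix `W` satisfies `W (C ⊗ 1) = (B ⊗ 1) W` (Kronecker
products) iff `W` lies in the span of the Kronecker products `X ⊗ M` where
`X C = B X` and `M` is arbitrary. -/
theorem stmt_8 (n : ℕ) (B C : Matrix (Fin n) (Fin n) ℂ)
    (W : Matrix (Fin n × Fin n) (Fin n × Fin n) ℂ) :
    W * (C ⊗ₖ (1 : Matrix (Fin n) (Fin n) ℂ)) =
      (B ⊗ₖ (1 : Matrix (Fin n) (Fin n) ℂ)) * W ↔
    W ∈ Submodule.span ℂ
      {W' : Matrix (Fin n × Fin n) (Fin n × Fin n) ℂ |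
        ∃ X M : Matrix (Fin n) (Fin n) ℂ, X * C = B * X ∧ W' = X ⊗ₖ M} :=
  SetLike.ext_iff.mp (Matrix.intertwiners_kronecker_one B C) W
end

section
/- Let ρ be a positive semidefinite operator on a finite-dimensional complex Hilbert space with trace 1, let λ_1 ≥ λ_2 ≥ ⋯ be its eigenvalues in decreasing order, and set ε(D) = ∑_{i > D} λ_i. Then for every 0 < α < 1 and every D ≥ 1, ε(D) ≤ exp( ((1−α)/α) · ( S^α(ρ) − log(D/(1−α)) ) ), where S^α(ρ) = (1/(1−α)) log Tr(ρ^α) is the Renyi entropy of order α; equivalently, log ε(D) ≤ ((1−α)/α)(S^α(ρ) − log(D/(1−α))). -/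
open scoped ComplexOrder
open Finset Polynomial Real

/-!
Write `μ = λ_D`, `H = ∑_{t<D} λ_t^α` and `T = ∑_{t≥D} λ_t^α`. Monotonicity gives
`D μ^α ≤ H` and `ε(D) ≤ T μ^(1-α)`; raising these to the powers `1-α` and `α` eliminates `μ`,
so `D^(1-α) ε(D)^α ≤ H^(1-α) T^α`, and the weighted AM-GM inequality bounds the right-hand side
by `(1-α)^(1-α) (H + T) = (1-α)^(1-α) Tr ρ^α`. Taking logarithms gives the claim.
-/

theorem Matrix.PosSemidef.nonneg_of_charpoly_eq_prod {𝕜 ι κ : Type*} [RCLike 𝕜] [Fintype ι]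
    [DecidableEq ι] {A : Matrix ι ι 𝕜} (hA : A.PosSemidef) {s : Finset κ} {μ : κ → ℝ}
    (h : A.charpoly = ∏ t ∈ s, (X - C (μ t : 𝕜))) {t : κ} (ht : t ∈ s) : 0 ≤ μ t := by
  have hroot : A.charpoly.IsRoot (μ t : 𝕜) := by
    rw [h, IsRoot, eval_prod]
    exact prod_eq_zero ht (by simp)
  exact RCLike.ofReal_nonneg.mp <| (Matrix.posSemidef_iff_isHermitian_and_spectrum_nonneg.mp hA).2
    (Matrix.mem_spectrum_iff_isRoot_charpoly.mpr hroot)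

namespace Real

variable {α : ℝ}

theorem le_rpow_mul_rpow_one_sub {x μ : ℝ} (hx : 0 ≤ x) (hxμ : x ≤ μ) (hα : α ≤ 1) :
    x ≤ x ^ α * μ ^ (1 - α) :=
  calc x = x ^ α * x ^ (1 - α) := by rw [← rpow_add' hx (by norm_num), add_sub_cancel, rpow_one]
    _ ≤ x ^ α * μ ^ (1 - α) := by gcongr

theorem rpow_one_sub_mul_rpow_le_of_le {a h x T μ : ℝ} (ha : 0 ≤ a) (hx : 0 ≤ x) (hT : 0 ≤ T)
    (hμ : 0 ≤ μ) (hα0 : 0 ≤ α) (hα1 : α ≤ 1) (hhead : a * μ ^ α ≤ h)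
    (htail : x ≤ T * μ ^ (1 - α)) : a ^ (1 - α) * x ^ α ≤ h ^ (1 - α) * T ^ α :=
  calc a ^ (1 - α) * x ^ α ≤ a ^ (1 - α) * (T * μ ^ (1 - α)) ^ α := by gcongr
    _ = (a * μ ^ α) ^ (1 - α) * T ^ α := by
      rw [mul_rpow hT (by positivity), mul_rpow ha (by positivity), ← rpow_mul hμ, ← rpow_mul hμ,
        mul_comm (1 - α) α]
      ring
    _ ≤ h ^ (1 - α) * T ^ α := by gcongr

theorem div_one_sub_rpow_mul_rpow_le_add {H T : ℝ} (hH : 0 ≤ H) (hT : 0 ≤ T) (hα0 : 0 ≤ α)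
    (hα1 : α < 1) : (H / (1 - α)) ^ (1 - α) * T ^ α ≤ H + T :=
  calc (H / (1 - α)) ^ (1 - α) * T ^ α ≤ (1 - α) * (H / (1 - α)) + α * T :=
        geom_mean_le_arith_mean2_weighted (by linarith) hα0 (div_nonneg hH (by linarith)) hT
          (by ring)
    _ ≤ H + T := by
      rw [mul_div_cancel₀ _ (by linarith)]
      nlinarith

theorem le_exp_of_rpow_one_sub_mul_rpow_le {x R S : ℝ} (hx : 0 ≤ x) (hR : 0 < R) (hα0 : 0 < α)
    (hα1 : α < 1) (h : R ^ (1 - α) * x ^ α ≤ S) :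
    x ≤ exp ((1 - α) / α * (1 / (1 - α) * log S - log R)) := by
  rcases hx.eq_or_lt with rfl | hx
  · exact (exp_pos _).le
  have hlog := log_le_log (by positivity) h
  rw [log_mul (by positivity) (by positivity), log_rpow hR, log_rpow hx] at hlog
  have hexp : (1 - α) / α * (1 / (1 - α) * log S - log R) = (log S - (1 - α) * log R) / α := by
    field_simp [(by linarith : 1 - α ≠ 0)]
  rw [← log_le_iff_le_exp hx, hexp, le_div_iff₀ hα0]
  linarith

end Real

theorem rpow_one_sub_mul_sum_Ico_rpow_le_sum_rpow {n : ℕ} {lam : ℕ → ℝ}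
    (hsort : ∀ s t : ℕ, s ≤ t → t < n → lam t ≤ lam s) (hnn : ∀ t < n, 0 ≤ lam t) {α : ℝ}
    (hα0 : 0 < α) (hα1 : α < 1) (D : ℕ) :
    ((D : ℝ) / (1 - α)) ^ (1 - α) * (∑ t ∈ Ico D n, lam t) ^ α ≤
      ∑ t ∈ range n, lam t ^ α := by
  rcases lt_or_ge D n with hDn | hnD
  swap
  · rw [Ico_eq_empty_of_le hnD, sum_empty, zero_rpow hα0.ne', mul_zero]
    exact sum_nonneg fun t ht => rpow_nonneg (hnn t (mem_range.mp ht)) _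
  set H := ∑ t ∈ range D, lam t ^ α
  set T := ∑ t ∈ Ico D n, lam t ^ α
  have hμ : 0 ≤ lam D := hnn D hDn
  have hhead : (D : ℝ) * lam D ^ α ≤ H := by
    simpa using card_nsmul_le_sum (range D) (fun t => lam t ^ α) (lam D ^ α)
      fun t ht => rpow_le_rpow hμ (hsort t D (mem_range.mp ht).le hDn) hα0.le
  have htail : ∑ t ∈ Ico D n, lam t ≤ T * lam D ^ (1 - α) := by
    rw [sum_mul]
    refine sum_le_sum fun t ht => ?_
    obtain ⟨hDt, htn⟩ := mem_Ico.mp ht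
    exact le_rpow_mul_rpow_one_sub (hnn t htn) (hsort D t hDt htn) hα1.le
  have hH : 0 ≤ H := sum_nonneg fun t ht => rpow_nonneg (hnn t (by grind)) _
  have hT : 0 ≤ T := sum_nonneg fun t ht => rpow_nonneg (hnn t (mem_Ico.mp ht).2) _
  have h1α : 0 < 1 - α := by linarith
  calc ((D : ℝ) / (1 - α)) ^ (1 - α) * (∑ t ∈ Ico D n, lam t) ^ α
      ≤ (H / (1 - α)) ^ (1 - α) * T ^ α := by
        refine rpow_one_sub_mul_rpow_le_of_le (by positivity)
          (sum_nonneg fun t ht => hnn t (mem_Ico.mp ht).2) hT hμ hα0.le hα1.le ?_ htail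
        rw [div_mul_eq_mul_div]
        gcongr
    _ ≤ H + T := div_one_sub_rpow_mul_rpow_le_add hH hT hα0.le hα1
    _ = ∑ t ∈ range n, lam t ^ α := sum_range_add_sum_Ico _ hDn.le

theorem stmt_18_general (n : ℕ) (ρ : Matrix (Fin n) (Fin n) ℂ)
    (hpsd : ρ.PosSemidef)
    (lam : ℕ → ℝ)
    (hsort : ∀ s t : ℕ, s ≤ t → t < n → lam t ≤ lam s)
    (heig : ρ.charpoly =
      ∏ t ∈ Finset.range n, (Polynomial.X - Polynomial.C ((lam t : ℂ))))
    (α : ℝ) (hα0 : 0 < α) (hα1 : α < 1) (D : ℕ) (hD : 1 ≤ D) :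
    ∑ t ∈ Finset.Ico D n, lam t ≤
      Real.exp (((1 - α) / α) *
        ((1 / (1 - α)) * Real.log (∑ t ∈ Finset.range n, lam t ^ α) -
          Real.log ((D : ℝ) / (1 - α)))) := by
  have hnn : ∀ t < n, 0 ≤ lam t := fun t ht =>
    hpsd.nonneg_of_charpoly_eq_prod heig (mem_range.mpr ht)
  have hDpos : (0 : ℝ) < D := by exact_mod_cast hD
  exact le_exp_of_rpow_one_sub_mul_rpow_le (sum_nonneg fun t ht => hnn t (mem_Ico.mp ht).2)
    (div_pos hDpos (by linarith)) hα0 hα1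
    (rpow_one_sub_mul_sum_Ico_rpow_le_sum_rpow hsort hnn hα0 hα1 D)

/-- Tail of the spectrum vs Renyi entropy.  Let `ρ` be a
density operator on a finite-dimensional space with eigenvalues
`lam 0 ≥ lam 1 ≥ ⋯` (enumerated with algebraic multiplicity via the
characteristic polynomial) and let `ε(D) = ∑_{t ≥ D} lam t`.  Then for
`0 < α < 1` and `D ≥ 1`,
`log ε(D) ≤ ((1-α)/α) (S^α(ρ) - log (D/(1-α)))`, where
`S^α(ρ) = (1/(1-α)) log Tr ρ^α`; equivalently,
`ε(D) ≤ exp (((1-α)/α) (S^α(ρ) - log (D/(1-α))))`. -/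
theorem stmt_18 (n : ℕ) (ρ : Matrix (Fin n) (Fin n) ℂ)
    (hpsd : ρ.PosSemidef) (htr : ρ.trace = 1)
    (lam : ℕ → ℝ)
    (hsort : ∀ s t : ℕ, s ≤ t → t < n → lam t ≤ lam s)
    (heig : ρ.charpoly =
      ∏ t ∈ Finset.range n, (Polynomial.X - Polynomial.C ((lam t : ℂ))))
    (α : ℝ) (hα0 : 0 < α) (hα1 : α < 1) (D : ℕ) (hD : 1 ≤ D) :
    ∑ t ∈ Finset.Ico D n, lam t ≤
      Real.exp (((1 - α) / α) *
        ((1 / (1 - α)) * Real.log (∑ t ∈ Finset.range n, lam t ^ α) -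
          Real.log ((D : ℝ) / (1 - α)))) :=
  stmt_18_general n ρ hpsd lam hsort heig α hα0 hα1 D hD
end

section
/- Let A_0, A_1, …, A_{d−1} be D×D complex matrices with A_0 invertible, and suppose there exists some L such that the products A_{i_1} A_{i_2} ⋯ A_{i_L} over all index strings (i_1,…,i_L) span the full space M_D(ℂ) of D×D matrices. Then already the products of length D² span M_D(ℂ); i.e., condition C1 holds with L_0 = D². -/
noncomputable section
namespace Stmt19Aux

open Module

variable {d D : ℕ}

abbrev MD (D : ℕ) := Matrix (Fin D) (Fin D) ℂ

/-- Span of the products of length `L`. -/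
def S (A : Fin d → Matrix (Fin D) (Fin D) ℂ) (L : ℕ) : Submodule ℂ (MD D) :=
  Submodule.span ℂ {M : Matrix (Fin D) (Fin D) ℂ |
    ∃ i : Fin L → Fin d, M = (List.ofFn fun k => A (i k)).prod}

lemma succR (A : Fin d → Matrix (Fin D) (Fin D) ℂ) (L : ℕ) :
    S A (L + 1) = ⨆ j : Fin d, Submodule.map (LinearMap.mulRight ℂ (A j)) (S A L) := by
  apply le_antisymm
  · rw [S, Submodule.span_le]
    rintro M ⟨i, rfl⟩
    refine le_iSup (fun j => Submodule.map (LinearMap.mulRight ℂ (A j)) (S A L))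
      (i (Fin.last L)) ?_
    refine ⟨(List.ofFn fun k : Fin L => A (i k.castSucc)).prod,
      Submodule.subset_span ⟨fun k => i k.castSucc, rfl⟩, ?_⟩
    rw [List.ofFn_succ', List.prod_concat, LinearMap.mulRight_apply]
  · refine iSup_le fun j => ?_
    rw [S, Submodule.map_span, Submodule.span_le]
    rintro _ ⟨_, ⟨i, rfl⟩, rfl⟩
    refine Submodule.subset_span ⟨Fin.snoc i j, ?_⟩
    rw [List.ofFn_succ', List.prod_concat, LinearMap.mulRight_apply]
    simp [Fin.snoc_castSucc, Fin.snoc_last]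

lemma succL_le (A : Fin d → Matrix (Fin D) (Fin D) ℂ) (L : ℕ) (j : Fin d) :
    Submodule.map (LinearMap.mulLeft ℂ (A j)) (S A L) ≤ S A (L + 1) := by
  rw [S, S, Submodule.map_span, Submodule.span_le]
  rintro _ ⟨_, ⟨i, rfl⟩, rfl⟩
  refine Submodule.subset_span ⟨Fin.cons j i, ?_⟩
  rw [List.ofFn_succ, List.prod_cons, LinearMap.mulLeft_apply]
  simp

/-- left multiplication by a unit as a linear equivalence -/
def lmulE (u : (MD D)ˣ) : MD D ≃ₗ[ℂ] MD D :=
  LinearEquiv.ofLinear (LinearMap.mulLeft ℂ (u : MD D))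
    (LinearMap.mulLeft ℂ ((u⁻¹ : (MD D)ˣ) : MD D))
    (by refine LinearMap.ext fun x => ?_
        show (u : MD D) * (((u⁻¹ : (MD D)ˣ) : MD D) * x) = x
        rw [← mul_assoc, Units.mul_inv, one_mul])
    (by refine LinearMap.ext fun x => ?_
        show ((u⁻¹ : (MD D)ˣ) : MD D) * ((u : MD D) * x) = x
        rw [← mul_assoc, Units.inv_mul, one_mul])

lemma lmulE_coe (u : (MD D)ˣ) :
    (lmulE u : MD D →ₗ[ℂ] MD D) = LinearMap.mulLeft ℂ (u : MD D) := rfl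

lemma comm_map (u : (MD D)ˣ) (b : MD D) (p : Submodule ℂ (MD D)) :
    Submodule.map (LinearMap.mulRight ℂ b) (Submodule.map (lmulE u : MD D →ₗ[ℂ] MD D) p)
      = Submodule.map (lmulE u : MD D →ₗ[ℂ] MD D) (Submodule.map (LinearMap.mulRight ℂ b) p) := by
  rw [← Submodule.map_comp, ← Submodule.map_comp]
  congr 1
  refine LinearMap.ext fun x => ?_
  show (u : MD D) * x * b = (u : MD D) * (x * b)
  rw [mul_assoc]

variable (A : Fin d → Matrix (Fin D) (Fin D) ℂ) (u : (MD D)ˣ) (hu : ∃ j : Fin d, A j = u)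

include hu

lemma mapE_le (L : ℕ) :
    Submodule.map (lmulE u : MD D →ₗ[ℂ] MD D) (S A L) ≤ S A (L + 1) := by
  obtain ⟨j, hj⟩ := hu
  rw [lmulE_coe, ← hj]
  exact succL_le A L j

omit hu in
/-- Once stagnation happens, it propagates. -/
lemma stagnation {L : ℕ}
    (h : S A (L + 1) = Submodule.map (lmulE u : MD D →ₗ[ℂ] MD D) (S A L)) :
    S A (L + 2) = Submodule.map (lmulE u : MD D →ₗ[ℂ] MD D) (S A (L + 1)) := by
  calc S A (L + 2) = ⨆ j : Fin d, Submodule.map (LinearMap.mulRight ℂ (A j)) (S A (L + 1)) :=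
        succR A (L + 1)
    _ = ⨆ j : Fin d, Submodule.map (lmulE u : MD D →ₗ[ℂ] MD D)
          (Submodule.map (LinearMap.mulRight ℂ (A j)) (S A L)) := by
        refine iSup_congr fun j => ?_
        rw [h, comm_map]
    _ = Submodule.map (lmulE u : MD D →ₗ[ℂ] MD D)
          (⨆ j : Fin d, Submodule.map (LinearMap.mulRight ℂ (A j)) (S A L)) :=
        (Submodule.map_iSup _ _).symm
    _ = _ := by rw [← succR]

lemma stagnation_forever {L : ℕ}
    (h : S A (L + 1) = Submodule.map (lmulE u : MD D →ₗ[ℂ] MD D) (S A L)) :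
    ∀ k, S A (L + k + 1) = Submodule.map (lmulE u : MD D →ₗ[ℂ] MD D) (S A (L + k)) := by
  intro k
  induction k with
  | zero => exact h
  | succ k ih => exact stagnation A u ih

lemma stagnation_finrank {L : ℕ}
    (h : S A (L + 1) = Submodule.map (lmulE u : MD D →ₗ[ℂ] MD D) (S A L)) :
    ∀ k, finrank ℂ (S A (L + k)) = finrank ℂ (S A L) := by
  intro k
  induction k with
  | zero => rfl
  | succ k ih =>
      rw [show L + (k + 1) = L + k + 1 from rfl, stagnation_forever A u hu h k,
        LinearEquiv.finrank_map_eq, ih]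

lemma finrank_le_succ (L : ℕ) : finrank ℂ (S A L) ≤ finrank ℂ (S A (L + 1)) := by
  calc finrank ℂ (S A L)
      = finrank ℂ (Submodule.map (lmulE u : MD D →ₗ[ℂ] MD D) (S A L)) :=
        (LinearEquiv.finrank_map_eq _ _).symm
    _ ≤ finrank ℂ (S A (L + 1)) := Submodule.finrank_mono (mapE_le A u hu L)

lemma top_propagates {N : ℕ} (hN : S A N = ⊤) : ∀ k, S A (N + k) = ⊤ := by
  intro k
  induction k with
  | zero => exact hN
  | succ k ih =>
      refine top_le_iff.mp ?_
      calc (⊤ : Submodule ℂ (MD D))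
          = Submodule.map (lmulE u : MD D →ₗ[ℂ] MD D) (S A (N + k)) := by
            rw [ih, Submodule.map_top, LinearEquiv.range]
        _ ≤ S A (N + k + 1) := mapE_le A u hu (N + k)

end Stmt19Aux
end



/-- Condition C1 with `L0 = D²` when `A 0` is invertible.
If `A 0` is invertible and the products `A_{i₁}⋯A_{i_L}` of some length `L` span
all of `M_D(ℂ)`, then already the products of length `D²` span `M_D(ℂ)`. -/
theorem stmt_19 (d D : ℕ) (hd : 0 < d)
    (A : Fin d → Matrix (Fin D) (Fin D) ℂ)
    (hA0 : IsUnit (A ⟨0, hd⟩))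
    (hspan : ∃ L : ℕ, Submodule.span ℂ
      {M : Matrix (Fin D) (Fin D) ℂ |
        ∃ i : Fin L → Fin d, M = (List.ofFn fun k => A (i k)).prod} = ⊤) :
    Submodule.span ℂ
      {M : Matrix (Fin D) (Fin D) ℂ |
        ∃ i : Fin (D ^ 2) → Fin d, M = (List.ofFn fun k => A (i k)).prod} = ⊤ := by
  classical
  open Module Stmt19Aux in
  rcases Nat.eq_zero_or_pos D with hD | hD
  · subst hD
    refine Submodule.eq_top_iff'.mpr fun x => ?_
    rw [Subsingleton.elim x 0]
    exact Submodule.zero_mem _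
  · obtain ⟨u, hu⟩ := hA0
    have huA : ∃ j : Fin d, A j = (u : Stmt19Aux.MD D) := ⟨⟨0, hd⟩, hu.symm⟩
    have hex : ∃ N, Stmt19Aux.S A N = ⊤ := hspan
    set N := Nat.find hex with hNdef
    have hN : Stmt19Aux.S A N = ⊤ := Nat.find_spec hex
    have hmin : ∀ L, L < N → Stmt19Aux.S A L ≠ ⊤ := fun L hL => Nat.find_min hex hL
    have hrank_total : finrank ℂ (Stmt19Aux.MD D) = D ^ 2 := by
      show finrank ℂ (Matrix (Fin D) (Fin D) ℂ) = D ^ 2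
      rw [Module.finrank_matrix]
      simp [sq]
    have hstrict : ∀ L, L < N →
        finrank ℂ (Stmt19Aux.S A L) + 1 ≤ finrank ℂ (Stmt19Aux.S A (L + 1)) := by
      intro L hL
      by_contra hc
      push_neg at hc
      have hle : finrank ℂ (Stmt19Aux.S A (L + 1)) ≤ finrank ℂ (Stmt19Aux.S A L) :=
        Nat.lt_succ_iff.mp hc
      have heq : Stmt19Aux.S A (L + 1)
          = Submodule.map (Stmt19Aux.lmulE u : Stmt19Aux.MD D →ₗ[ℂ] Stmt19Aux.MD D)
            (Stmt19Aux.S A L) := by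
        refine (Submodule.eq_of_le_of_finrank_le (Stmt19Aux.mapE_le A u huA L) ?_).symm
        rw [LinearEquiv.finrank_map_eq]
        exact hle
      have hconst := Stmt19Aux.stagnation_finrank A u huA heq (N - L)
      rw [Nat.add_sub_cancel' hL.le] at hconst
      have hDL : finrank ℂ (Stmt19Aux.S A L) = finrank ℂ (Stmt19Aux.MD D) := by
        rw [← hconst, hN, finrank_top]
      exact hmin L hL (Submodule.eq_top_of_finrank_eq hDL)
    have hND : N ≤ D ^ 2 := by
      by_contra h
      push_neg at h
      have hgrow : ∀ L, L ≤ N → L + 1 ≤ finrank ℂ (Stmt19Aux.S A L) := by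
        intro L
        induction L with
        | zero =>
            intro _
            have h1 : (1 : Stmt19Aux.MD D) ∈ Stmt19Aux.S A 0 :=
              Submodule.subset_span ⟨Fin.elim0, by simp⟩
            by_contra hz
            have hz0 : finrank ℂ (Stmt19Aux.S A 0) = 0 := by omega
            rw [Submodule.finrank_eq_zero] at hz0
            rw [hz0, Submodule.mem_bot] at h1
            haveI : Nonempty (Fin D) := Fin.pos_iff_nonempty.mp hD
            exact one_ne_zero h1
        | succ L ih =>
            intro hL
            have hL' : L < N := Nat.lt_of_succ_le hL
            have := hstrict L hL'
            have := ih hL'.le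
            omega
      have h2 : D ^ 2 + 2 ≤ finrank ℂ (Stmt19Aux.S A (D ^ 2 + 1)) := hgrow (D ^ 2 + 1) h
      have h3 : finrank ℂ (Stmt19Aux.S A (D ^ 2 + 1)) ≤ D ^ 2 := by
        rw [← hrank_total]
        exact Submodule.finrank_le _
      omega
    have hfin := Stmt19Aux.top_propagates A u huA hN (D ^ 2 - N)
    rw [Nat.add_sub_cancel' hND] at hfin
    exact hfin
end
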